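/- arXiv:1611.04415 — 4 statements merged into one kernel-verified Lean document; each statement's English description precedes it below -/
import Mathlib

section
/- For any matrix M in ℂ^{2n×2n}, the matrix M|_H := (1/2)(M + J M^H J), where J is the fundamental symplectic matrix, is the (unique) closest Hamiltonian matrix to M in the Frobenius norm; that is, M|_H is Hamiltonian and for every Hamiltonian matrix Q in ℂ^{2n×2n} one has ‖M − M|_H‖_F ≤ ‖M − Q‖_F, with equality only if Q = M|_H. -/
open Matrix

noncomputable def frobNorm {m k : Type*} [Fintype m] [Fintype k] (M : Matrix m k ℂ) : ℝ :=
  Real.sqrt (∑ i, ∑ j, ‖M i j‖ ^ 2)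

noncomputable def Jmat (n : ℕ) : Matrix (Fin n ⊕ Fin n) (Fin n ⊕ Fin n) ℂ :=
  Matrix.fromBlocks 0 1 (-1) 0

def IsHamiltonian {n : ℕ} (Q : Matrix (Fin n ⊕ Fin n) (Fin n ⊕ Fin n) ℂ) : Prop :=
  Q * Jmat n = (Q * Jmat n)ᴴ

/-- The projection of a matrix onto the set of Hamiltonian matrices. -/
noncomputable def hamProj {n : ℕ} (M : Matrix (Fin n ⊕ Fin n) (Fin n ⊕ Fin n) ℂ) :
    Matrix (Fin n ⊕ Fin n) (Fin n ⊕ Fin n) ℂ :=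
  (1 / 2 : ℂ) • (M + Jmat n * Mᴴ * Jmat n)

/-!
The map `R M = J Mᴴ J` is a real-linear involution whose fixed points are exactly the Hamiltonian
matrices, and it preserves the Frobenius norm because `J` is unitary. `M|_H` is the average of `M`
and `R M`, so `R` negates `M - M|_H` and fixes `M|_H - Q` for every Hamiltonian `Q`. For `A` with
`R A = -A` and `B` with `R B = B`, applying the isometry `R` gives `‖A + B‖ = ‖A - B‖`, and the
parallelogram law turns this into `‖A + B‖² = ‖A‖² + ‖B‖²`. Hence
`‖M - Q‖² = ‖M - M|_H‖² + ‖M|_H - Q‖²`, which gives both minimality and uniqueness.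
-/

attribute [local instance] Matrix.frobeniusNormedAddCommGroup

section Frobenius

variable {m k : Type*} [Fintype m] [Fintype k]

lemma frobNorm_eq_norm (X : Matrix m k ℂ) : frobNorm X = ‖X‖ := by
  rw [frobNorm, frobenius_norm_def, Real.sqrt_eq_rpow]
  simp only [Real.rpow_two]

lemma frobenius_norm_sq_eq_re_trace (X : Matrix m k ℂ) : ‖X‖ ^ 2 = (Xᴴ * X).trace.re := by
  rw [← frobNorm_eq_norm, frobNorm, Real.sq_sqrt (by positivity), Finset.sum_comm]
  simp only [trace, diag, mul_apply, conjTranspose_apply, Complex.re_sum, Complex.star_def,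
    Complex.conj_mul']
  norm_cast

lemma frobenius_norm_mul_mul_of_unitary [DecidableEq m] [DecidableEq k] {U : Matrix m m ℂ}
    {V : Matrix k k ℂ} (hU : Uᴴ * U = 1) (hV : V * Vᴴ = 1) (X : Matrix m k ℂ) :
    ‖U * X * V‖ = ‖X‖ := by
  have hgram : (U * X * V)ᴴ * (U * X * V) = Vᴴ * (Xᴴ * X * V) := by
    simp only [conjTranspose_mul, Matrix.mul_assoc]
    rw [← Matrix.mul_assoc Uᴴ, hU, Matrix.one_mul]
  rw [← sq_eq_sq₀ (norm_nonneg _) (norm_nonneg _), frobenius_norm_sq_eq_re_trace,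
    frobenius_norm_sq_eq_re_trace, hgram, trace_mul_comm, Matrix.mul_assoc, hV, Matrix.mul_one]

lemma frobenius_parallelogram_law (A B : Matrix m k ℂ) :
    ‖A + B‖ ^ 2 + ‖A - B‖ ^ 2 = 2 * (‖A‖ ^ 2 + ‖B‖ ^ 2) := by
  have hgram : (A + B)ᴴ * (A + B) + (A - B)ᴴ * (A - B) = (2 : ℂ) • (Aᴴ * A + Bᴴ * B) := by
    simp only [conjTranspose_add, conjTranspose_sub, Matrix.add_mul, Matrix.mul_add,
      Matrix.sub_mul, Matrix.mul_sub]
    module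
  simp only [frobenius_norm_sq_eq_re_trace, ← Complex.add_re, ← trace_add, hgram, trace_smul]
  simp

end Frobenius

section Symplectic

lemma Jmat_conjTranspose (n : ℕ) : (Jmat n)ᴴ = -Jmat n := by
  simp only [Jmat, fromBlocks_conjTranspose, fromBlocks_neg]
  norm_num

lemma Jmat_mul_Jmat (n : ℕ) : Jmat n * Jmat n = -1 := by
  rw [← fromBlocks_one]
  simp only [Jmat, fromBlocks_multiply, fromBlocks_neg]
  norm_num

lemma Jmat_conjTranspose_mul_Jmat (n : ℕ) : (Jmat n)ᴴ * Jmat n = 1 := by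
  rw [Jmat_conjTranspose, Matrix.neg_mul, Jmat_mul_Jmat, neg_neg]

lemma Jmat_mul_Jmat_conjTranspose (n : ℕ) : Jmat n * (Jmat n)ᴴ = 1 := by
  rw [Jmat_conjTranspose, Matrix.mul_neg, Jmat_mul_Jmat, neg_neg]

variable {n : ℕ}

noncomputable def hamReflection (M : Matrix (Fin n ⊕ Fin n) (Fin n ⊕ Fin n) ℂ) :
    Matrix (Fin n ⊕ Fin n) (Fin n ⊕ Fin n) ℂ :=
  Jmat n * Mᴴ * Jmat n

lemma hamReflection_hamReflection (M : Matrix (Fin n ⊕ Fin n) (Fin n ⊕ Fin n) ℂ) :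
    hamReflection (hamReflection M) = M := by
  simp only [hamReflection, conjTranspose_mul, conjTranspose_conjTranspose, Jmat_conjTranspose,
    Matrix.mul_neg, Matrix.neg_mul, neg_neg, Matrix.mul_assoc, Jmat_mul_Jmat]
  rw [← Matrix.mul_assoc (Jmat n), Jmat_mul_Jmat]
  simp

lemma hamReflection_add (A B : Matrix (Fin n ⊕ Fin n) (Fin n ⊕ Fin n) ℂ) :
    hamReflection (A + B) = hamReflection A + hamReflection B := by
  simp only [hamReflection, conjTranspose_add, Matrix.mul_add, Matrix.add_mul]

lemma hamReflection_sub (A B : Matrix (Fin n ⊕ Fin n) (Fin n ⊕ Fin n) ℂ) :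
    hamReflection (A - B) = hamReflection A - hamReflection B := by
  simp only [hamReflection, conjTranspose_sub, Matrix.mul_sub, Matrix.sub_mul]

lemma norm_hamReflection (M : Matrix (Fin n ⊕ Fin n) (Fin n ⊕ Fin n) ℂ) :
    ‖hamReflection M‖ = ‖M‖ := by
  rw [hamReflection, frobenius_norm_mul_mul_of_unitary (Jmat_conjTranspose_mul_Jmat n)
    (Jmat_mul_Jmat_conjTranspose n), frobenius_norm_conjTranspose]

lemma isHamiltonian_iff_hamReflection_eq (Q : Matrix (Fin n ⊕ Fin n) (Fin n ⊕ Fin n) ℂ) :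
    IsHamiltonian Q ↔ hamReflection Q = Q := by
  have hQJ : (Q * Jmat n)ᴴ = -(Jmat n * Qᴴ) := by
    rw [conjTranspose_mul, Jmat_conjTranspose, Matrix.neg_mul]
  rw [IsHamiltonian, hQJ, hamReflection]
  constructor
  · intro h
    rw [← neg_neg (Jmat n * Qᴴ), ← h, Matrix.neg_mul, Matrix.mul_assoc, Jmat_mul_Jmat]
    simp
  · intro h
    nth_rewrite 1 [← h]
    rw [Matrix.mul_assoc _ (Jmat n), Jmat_mul_Jmat]
    simp

lemma hamReflection_hamProj (M : Matrix (Fin n ⊕ Fin n) (Fin n ⊕ Fin n) ℂ) :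
    hamReflection (hamProj M) = hamProj M := by
  have hsmul (X : Matrix (Fin n ⊕ Fin n) (Fin n ⊕ Fin n) ℂ) :
      hamReflection ((1 / 2 : ℂ) • X) = (1 / 2 : ℂ) • hamReflection X := by
    simp [hamReflection]
  rw [hamProj, ← hamReflection, hsmul, hamReflection_add, hamReflection_hamReflection, add_comm]

lemma hamReflection_sub_hamProj (M : Matrix (Fin n ⊕ Fin n) (Fin n ⊕ Fin n) ℂ) :
    hamReflection (M - hamProj M) = -(M - hamProj M) := by
  rw [hamReflection_sub, hamReflection_hamProj, hamProj, ← hamReflection]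
  module

lemma norm_add_sq_of_hamReflection {A B : Matrix (Fin n ⊕ Fin n) (Fin n ⊕ Fin n) ℂ}
    (hA : hamReflection A = -A) (hB : hamReflection B = B) :
    ‖A + B‖ ^ 2 = ‖A‖ ^ 2 + ‖B‖ ^ 2 := by
  have hsym : ‖A + B‖ = ‖A - B‖ := by
    rw [← norm_hamReflection, hamReflection_add, hA, hB, ← norm_neg, neg_add, neg_neg,
      ← sub_eq_add_neg]
  have hpar := frobenius_parallelogram_law A B
  rw [← hsym] at hpar
  linarith

end Symplectic

/-- For any matrix `M ∈ ℂ^{2n×2n}`, the matrix `M|_H = (1/2)(M + J Mᴴ J)` is Hamiltonian and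
is the unique closest Hamiltonian matrix to `M` in the Frobenius norm. -/
theorem closest_hamiltonian (n : ℕ) (M : Matrix (Fin n ⊕ Fin n) (Fin n ⊕ Fin n) ℂ) :
    IsHamiltonian (hamProj M) ∧
    ∀ Q : Matrix (Fin n ⊕ Fin n) (Fin n ⊕ Fin n) ℂ, IsHamiltonian Q →
      frobNorm (M - hamProj M) ≤ frobNorm (M - Q) ∧
      (frobNorm (M - hamProj M) = frobNorm (M - Q) → Q = hamProj M) := by
  refine ⟨(isHamiltonian_iff_hamReflection_eq _).2 (hamReflection_hamProj M), fun Q hQ => ?_⟩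
  have hB : hamReflection (hamProj M - Q) = hamProj M - Q := by
    rw [hamReflection_sub, hamReflection_hamProj, (isHamiltonian_iff_hamReflection_eq Q).1 hQ]
  have hpyth : ‖M - Q‖ ^ 2 = ‖M - hamProj M‖ ^ 2 + ‖hamProj M - Q‖ ^ 2 := by
    rw [← norm_add_sq_of_hamReflection (hamReflection_sub_hamProj M) hB, sub_add_sub_cancel]
  simp only [frobNorm_eq_norm]
  refine ⟨?_, fun heq => ?_⟩
  · rw [← pow_le_pow_iff_left₀ (norm_nonneg _) (norm_nonneg _) two_ne_zero, hpyth]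
    exact le_add_of_nonneg_right (sq_nonneg _)
  · have hzero : ‖hamProj M - Q‖ ^ 2 = 0 := by rw [heq] at hpyth; linarith
    exact (sub_eq_zero.1 (norm_eq_zero.1 (pow_eq_zero_iff two_ne_zero |>.1 hzero))).symm
end

section
/- Let x, y ∈ ℂⁿ, let P denote the diagonal-averaging map onto Toeplitz matrices (P(M)_{ij} is the arithmetic mean of the entries of M on the diagonal through (i,j)). Then for every Toeplitz matrix E ∈ ℂ^{n×n} with ‖E‖_F ≤ 1 one has |y^H E x| ≤ ‖P(y x^H)‖_F; moreover, if P(y x^H) ≠ 0 then for any unimodular η ∈ ℂ the Toeplitz matrix E = η P(y x^H)/‖P(y x^H)‖_F satisfies ‖E‖_F = 1 and |y^H E x| = ‖P(y x^H)‖_F. -/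
open Matrix

/-- A matrix is Toeplitz if its entries are constant along diagonals, i.e. the `(i,j)` entry
depends only on `j − i`. -/
def IsToeplitz {n : ℕ} (T : Matrix (Fin n) (Fin n) ℂ) : Prop :=
  ∀ i j k l : Fin n, (j : ℤ) - (i : ℤ) = (l : ℤ) - (k : ℤ) → T i j = T k l

/-- The diagonal-averaging map onto Toeplitz matrices: each entry is replaced by the
arithmetic mean of the entries on the same diagonal. -/
noncomputable def toepProj {n : ℕ} (M : Matrix (Fin n) (Fin n) ℂ) : Matrix (Fin n) (Fin n) ℂ :=
  fun i j =>
    (∑ p ∈ Finset.univ.filter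
        (fun p : Fin n × Fin n => (p.2 : ℤ) - (p.1 : ℤ) = (j : ℤ) - (i : ℤ)), M p.1 p.2) /
      ((Finset.univ.filter
        (fun p : Fin n × Fin n => (p.2 : ℤ) - (p.1 : ℤ) = (j : ℤ) - (i : ℤ))).card : ℂ)


/-- The Euclidean norm of a vector in ℂⁿ. -/
noncomputable def euclNorm {n : ℕ} (x : Fin n → ℂ) : ℝ :=
  Real.sqrt (∑ i, ‖x i‖ ^ 2)

/-! Viewing matrices as vectors of `ℂ^{n × n}`, `yᴴ E x` is the Frobenius inner product
`⟪y xᴴ, E⟫`. Diagonal averaging is the orthogonal projection onto the Toeplitz matrices, so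
`⟪y xᴴ, E⟫ = ⟪P(y xᴴ), E⟫` for Toeplitz `E`; Cauchy–Schwarz gives the bound, and it is attained
when `E` is a unimodular multiple of `P(y xᴴ)`. -/

open scoped InnerProductSpace

section Frobenius

variable {m k : Type*}

noncomputable def flat (M : Matrix m k ℂ) : EuclideanSpace ℂ (m × k) :=
  WithLp.toLp 2 (Function.uncurry M)

lemma flat_smul (c : ℂ) (M : Matrix m k ℂ) : flat (c • M) = c • flat M := rfl

lemma flat_injective : Function.Injective (flat : Matrix m k ℂ → _) := fun _ _ h =>
  Matrix.ext fun i j => congrFun (congrArg WithLp.ofLp h) (i, j)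

variable [Fintype m] [Fintype k]

lemma frobNorm_eq_norm_flat (M : Matrix m k ℂ) : frobNorm M = ‖flat M‖ := by
  rw [EuclideanSpace.norm_eq, frobNorm, Fintype.sum_prod_type]
  rfl

lemma frobNorm_nonneg (M : Matrix m k ℂ) : 0 ≤ frobNorm M :=
  Real.sqrt_nonneg _

lemma frobNorm_pos {M : Matrix m k ℂ} (hM : M ≠ 0) : 0 < frobNorm M := by
  rw [frobNorm_eq_norm_flat, norm_pos_iff]
  exact fun h => hM (flat_injective (h.trans rfl))

lemma frobNorm_smul (c : ℂ) (M : Matrix m k ℂ) : frobNorm (c • M) = ‖c‖ * frobNorm M := by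
  rw [frobNorm_eq_norm_flat, frobNorm_eq_norm_flat, flat_smul, norm_smul]

lemma star_dotProduct_mulVec_eq_inner_flat (x : k → ℂ) (y : m → ℂ) (E : Matrix m k ℂ) :
    star y ⬝ᵥ (E *ᵥ x) = ⟪flat (vecMulVec y (star x)), flat E⟫_ℂ := by
  simp only [flat, EuclideanSpace.inner_toLp_toLp, dotProduct, mulVec, Fintype.sum_prod_type,
    Finset.mul_sum]
  refine Finset.sum_congr rfl fun i _ => Finset.sum_congr rfl fun j _ => ?_
  simp only [Function.uncurry, vecMulVec_apply, Pi.star_apply, star_mul', star_star]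
  ring

end Frobenius

lemma Finset.sum_mul_average_of_constantOn {ι K : Type*} [Field K] [CharZero K] {s : Finset ι}
    {g : ι → K} (hg : ∀ p ∈ s, ∀ q ∈ s, g p = g q) (f : ι → K) :
    ∑ q ∈ s, g q * ((∑ p ∈ s, f p) / s.card) = ∑ q ∈ s, g q * f q := by
  rcases s.eq_empty_or_nonempty with rfl | ⟨q₀, hq₀⟩
  · simp
  have hs : (s.card : K) ≠ 0 := Nat.cast_ne_zero.2 (Finset.card_ne_zero_of_mem hq₀)
  calc ∑ q ∈ s, g q * ((∑ p ∈ s, f p) / s.card)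
        = ∑ q ∈ s, g q₀ * ((∑ p ∈ s, f p) / s.card) :=
          Finset.sum_congr rfl fun q hq => by rw [hg q hq q₀ hq₀]
    _ = ∑ q ∈ s, g q₀ * f q := by
          rw [Finset.sum_const, nsmul_eq_mul, ← Finset.mul_sum]
          field_simp
    _ = ∑ q ∈ s, g q * f q := Finset.sum_congr rfl fun q hq => by rw [hg q hq q₀ hq₀]

section Toeplitz

variable {n : ℕ}

lemma isToeplitz_toepProj (M : Matrix (Fin n) (Fin n) ℂ) : IsToeplitz (toepProj M) :=
  fun i j k l h => by simp only [toepProj, h]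

lemma IsToeplitz.smul {E : Matrix (Fin n) (Fin n) ℂ} (hE : IsToeplitz E) (c : ℂ) :
    IsToeplitz (c • E) := fun i j k l h => by
  simp only [Matrix.smul_apply, hE i j k l h]

lemma IsToeplitz.inner_flat_toepProj {E : Matrix (Fin n) (Fin n) ℂ} (hE : IsToeplitz E)
    (M : Matrix (Fin n) (Fin n) ℂ) : ⟪flat (toepProj M), flat E⟫_ℂ = ⟪flat M, flat E⟫_ℂ := by
  let diagIndex : Fin n × Fin n → ℤ := fun q => (q.2 : ℤ) - q.1
  have hmaps : ∀ q ∈ Finset.univ, diagIndex q ∈ Finset.univ.image diagIndex :=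
    fun q _ => Finset.mem_image_of_mem _ (Finset.mem_univ q)
  simp only [flat, EuclideanSpace.inner_toLp_toLp, dotProduct]
  -- `E` is constant on each diagonal, so averaging `M` along it leaves the sum unchanged.
  rw [← Finset.sum_fiberwise_of_maps_to hmaps, ← Finset.sum_fiberwise_of_maps_to hmaps]
  refine Finset.sum_congr rfl fun e _ => ?_
  calc ∑ q ∈ Finset.univ with diagIndex q = e, E q.1 q.2 * star (toepProj M q.1 q.2)
      = ∑ q ∈ Finset.univ with diagIndex q = e, E q.1 q.2 *
          ((∑ p ∈ Finset.univ with diagIndex p = e, star (M p.1 p.2)) /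
            (Finset.univ.filter fun p => diagIndex p = e).card) :=
        Finset.sum_congr rfl fun q hq => by
          rw [← (Finset.mem_filter.1 hq).2]
          simp only [toepProj, star_div₀, star_sum, star_natCast, diagIndex]
    _ = _ := Finset.sum_mul_average_of_constantOn (fun p hp q hq => hE _ _ _ _
          ((Finset.mem_filter.1 hp).2.trans (Finset.mem_filter.1 hq).2.symm)) _

end Toeplitz

/-- For every Toeplitz matrix `E` with `‖E‖_F ≤ 1`, `|yᴴ E x| ≤ ‖P(y xᴴ)‖_F`; moreover if
`P(y xᴴ) ≠ 0` then the normalized projected Wilkinson perturbation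
`E = η P(y xᴴ)/‖P(y xᴴ)‖_F` is a Toeplitz matrix of unit Frobenius norm attaining the bound. -/
theorem toeplitz_wilkinson_maximal (n : ℕ) (x y : Fin n → ℂ) :
    (∀ E : Matrix (Fin n) (Fin n) ℂ, IsToeplitz E → frobNorm E ≤ 1 →
      ‖star y ⬝ᵥ (E *ᵥ x)‖ ≤ frobNorm (toepProj (Matrix.vecMulVec y (star x)))) ∧
    (toepProj (Matrix.vecMulVec y (star x)) ≠ 0 →
      ∀ η : ℂ, ‖η‖ = 1 →
        IsToeplitz (η • ((frobNorm (toepProj (Matrix.vecMulVec y (star x))) : ℂ)⁻¹ •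
            toepProj (Matrix.vecMulVec y (star x)))) ∧
        frobNorm (η • ((frobNorm (toepProj (Matrix.vecMulVec y (star x))) : ℂ)⁻¹ •
            toepProj (Matrix.vecMulVec y (star x)))) = 1 ∧
        ‖star y ⬝ᵥ ((η • ((frobNorm (toepProj (Matrix.vecMulVec y (star x))) : ℂ)⁻¹ •
            toepProj (Matrix.vecMulVec y (star x)))) *ᵥ x)‖ =
          frobNorm (toepProj (Matrix.vecMulVec y (star x)))) := by
  set P := toepProj (vecMulVec y (star x))
  have hP : IsToeplitz P := isToeplitz_toepProj _
  have hinner : ∀ E, IsToeplitz E → star y ⬝ᵥ (E *ᵥ x) = ⟪flat P, flat E⟫_ℂ := fun E hE => by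
    rw [star_dotProduct_mulVec_eq_inner_flat, hE.inner_flat_toepProj]
  refine ⟨fun E hE hE₁ => ?_, fun hP₀ η hη => ?_⟩
  · calc ‖star y ⬝ᵥ (E *ᵥ x)‖ = ‖⟪flat P, flat E⟫_ℂ‖ := by rw [hinner E hE]
      _ ≤ frobNorm P * frobNorm E := by
          simpa only [frobNorm_eq_norm_flat] using norm_inner_le_norm _ _
      _ ≤ frobNorm P := mul_le_of_le_one_right (frobNorm_nonneg _) hE₁
  have hPpos : 0 < frobNorm P := frobNorm_pos hP₀
  have hc : ‖η * (frobNorm P : ℂ)⁻¹‖ = (frobNorm P)⁻¹ := by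
    rw [norm_mul, hη, one_mul, norm_inv, Complex.norm_of_nonneg hPpos.le]
  rw [smul_smul]
  refine ⟨hP.smul _, by rw [frobNorm_smul, hc, inv_mul_cancel₀ hPpos.ne'], ?_⟩
  rw [hinner _ (hP.smul _), flat_smul, inner_smul_right, inner_self_eq_norm_sq_to_K,
    ← frobNorm_eq_norm_flat, norm_mul, hc, norm_pow, RCLike.norm_ofReal,
    abs_of_nonneg hPpos.le]
  field_simp
end

section
/- Let A, E ∈ ℂ^{n×n}, and let λ : ℝ → ℂ and v : ℝ → ℂⁿ be functions differentiable at 0 such that (A + tE) v(t) = λ(t) v(t) for all t in a neighborhood of 0. Let x := v(0), λ₀ := λ(0), and let y ∈ ℂⁿ satisfy A^H y = conj(λ₀) · y (i.e. y is a left eigenvector of A for λ₀) and y^H x ≠ 0. Then the derivative of λ at 0 equals (y^H E x)/(y^H x). -/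
/-!
Pairing the eigen-equation `(A + tE) v(t) = λ(t) v(t)` with the left eigenvector `y` kills the
`A`-term up to `λ(0)`, leaving `(λ(t) - λ(0)) yᴴv(t) = t · yᴴEv(t)`. Since `v` is continuous at `0`
and `yᴴv(0) ≠ 0`, the difference quotient of `λ` is `yᴴEv(t) / yᴴv(t)` for small `t ≠ 0`, which tends
to `yᴴEx / yᴴx`.
-/

open Matrix Filter Topology

theorem hasDerivAt_of_eventually_sub_mul_eq_sub_smul {𝕜 𝕜' : Type*}
    [NontriviallyNormedField 𝕜] [NormedField 𝕜'] [NormedAlgebra 𝕜 𝕜'] {f g h : 𝕜 → 𝕜'} {a : 𝕜}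
    (hg : ContinuousAt g a) (hh : ContinuousAt h a) (hga : g a ≠ 0)
    (hfgh : ∀ᶠ t in 𝓝 a, (f t - f a) * g t = (t - a) • h t) :
    HasDerivAt f (h a / g a) a := by
  rw [hasDerivAt_iff_tendsto_slope]
  have hslope : h / g =ᶠ[𝓝[≠] a] slope f a := by
    filter_upwards [nhdsWithin_le_nhds (hfgh.and (hg.eventually_ne hga)),
      self_mem_nhdsWithin] with t ⟨ht, hgt⟩ (hta : t ≠ a)
    rw [slope_def_module, Pi.div_apply, div_eq_iff hgt, smul_mul_assoc, ht,
      inv_smul_smul₀ (sub_ne_zero.mpr hta)]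
  exact ((hh.div hg hga).tendsto.mono_left nhdsWithin_le_nhds).congr' hslope

theorem Matrix.star_vecMul_eq_smul_of_conjTranspose_mulVec_eq_smul {α n : Type*} [Fintype n]
    [CommSemiring α] [StarRing α] {A : Matrix n n α} {y : n → α} {μ : α}
    (hy : Aᴴ *ᵥ y = star μ • y) : star y ᵥ* A = μ • star y := by
  rw [← conjTranspose_conjTranspose A, ← star_mulVec, hy, star_smul, star_star]

theorem Matrix.sub_mul_dotProduct_eq_smul_of_mulVec_eq_smul {R α n : Type*} [Fintype n]
    [CommSemiring R] [CommRing α] [Algebra R α] {A E : Matrix n n α} {y w : n → α} {μ₀ μ : α}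
    {t : R} (hy : y ᵥ* A = μ₀ • y) (hw : (A + t • E) *ᵥ w = μ • w) :
    (μ - μ₀) * (y ⬝ᵥ w) = t • (y ⬝ᵥ (E *ᵥ w)) := by
  have hpair := congrArg (y ⬝ᵥ ·) hw
  simp only [add_mulVec, dotProduct_add, dotProduct_mulVec y A, hy, smul_mulVec,
    dotProduct_smul, smul_dotProduct, smul_eq_mul] at hpair
  linear_combination -hpair

theorem eigenvalue_derivative_general (n : ℕ) (A E : Matrix (Fin n) (Fin n) ℂ)
    (lam : ℝ → ℂ) (v : ℝ → Fin n → ℂ)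
    (hv : DifferentiableAt ℝ v 0)
    (heig : ∀ᶠ t in nhds (0 : ℝ), (A + t • E) *ᵥ v t = lam t • v t)
    (x : Fin n → ℂ) (hx : x = v 0)
    (y : Fin n → ℂ) (hy : Aᴴ *ᵥ y = (starRingEnd ℂ) (lam 0) • y)
    (hyx : star y ⬝ᵥ x ≠ 0) :
    deriv lam 0 = (star y ⬝ᵥ (E *ᵥ x)) / (star y ⬝ᵥ x) := by
  subst hx
  have hyA : star y ᵥ* A = lam 0 • star y :=
    star_vecMul_eq_smul_of_conjTranspose_mulVec_eq_smul hy
  have hvc : ContinuousAt v 0 := hv.continuousAt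
  have hderiv : HasDerivAt lam (star y ⬝ᵥ (E *ᵥ v 0) / (star y ⬝ᵥ v 0)) 0 := by
    refine hasDerivAt_of_eventually_sub_mul_eq_sub_smul (g := fun t ↦ star y ⬝ᵥ v t)
      (h := fun t ↦ star y ⬝ᵥ (E *ᵥ v t)) (by fun_prop) (by fun_prop) hyx ?_
    filter_upwards [heig] with t ht
    rw [sub_zero]
    exact sub_mul_dotProduct_eq_smul_of_mulVec_eq_smul hyA ht
  exact hderiv.deriv

/-- First-order eigenvalue perturbation (Wilkinson): if `(A + tE) v(t) = λ(t) v(t)` near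
`t = 0`, with `λ`, `v` differentiable at `0`, `x = v(0)`, and `y` a left eigenvector of `A`
for `λ(0)` with `yᴴ x ≠ 0`, then `λ'(0) = (yᴴ E x)/(yᴴ x)`. -/
theorem eigenvalue_derivative (n : ℕ) (A E : Matrix (Fin n) (Fin n) ℂ)
    (lam : ℝ → ℂ) (v : ℝ → Fin n → ℂ)
    (hlam : DifferentiableAt ℝ lam 0) (hv : DifferentiableAt ℝ v 0)
    (heig : ∀ᶠ t in nhds (0 : ℝ), (A + t • E) *ᵥ v t = lam t • v t)
    (x : Fin n → ℂ) (hx : x = v 0)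
    (y : Fin n → ℂ) (hy : Aᴴ *ᵥ y = (starRingEnd ℂ) (lam 0) • y)
    (hyx : star y ⬝ᵥ x ≠ 0) :
    deriv lam 0 = (star y ⬝ᵥ (E *ᵥ x)) / (star y ⬝ᵥ x) :=
  eigenvalue_derivative_general n A E lam v hv heig x hx y hy hyx
end

section
/- Let A ∈ ℂ^{n×n} be a Toeplitz matrix, E ∈ ℂ^{n×n} a Toeplitz matrix with ‖E‖_F = 1, and let λ : ℝ → ℂ, v : ℝ → ℂⁿ be differentiable at 0 with (A + tE) v(t) = λ(t) v(t) near t = 0. Set x := v(0) with ‖x‖₂ = 1 and suppose y ∈ ℂⁿ with ‖y‖₂ = 1 satisfies A^H y = conj(λ(0)) · y and y^H x ≠ 0. Then |λ'(0)| ≤ ‖P(y x^H)‖_F / |y^H x|, where P is the diagonal-averaging map onto Toeplitz matrices. -/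
open Matrix

/-!
Pairing `(A + t E) v(t) = λ(t) v(t)` with the left eigenvector `y` and differentiating at `0`,
the contributions of `A` cancel and `λ'(0) · yᴴx = yᴴ E x = ⟨y xᴴ, E⟩_F`. A Toeplitz `E` is
constant on each diagonal, so replacing `y xᴴ` by its diagonal average `P(y xᴴ)` does not change
this pairing, and Cauchy–Schwarz with `‖E‖_F = 1` gives `|λ'(0)| · |yᴴx| ≤ ‖P(y xᴴ)‖_F`.
-/

open Finset

lemma norm_sum_star_mul_le_frobNorm {m k : Type*} [Fintype m] [Fintype k]
    (M N : Matrix m k ℂ) :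
    ‖∑ p : m × k, star (M p.1 p.2) * N p.1 p.2‖ ≤ frobNorm M * frobNorm N := by
  have hsq (M : Matrix m k ℂ) : ∑ p : m × k, ‖M p.1 p.2‖ ^ 2 = ∑ i, ∑ j, ‖M i j‖ ^ 2 :=
    Fintype.sum_prod_type _
  calc ‖∑ p : m × k, star (M p.1 p.2) * N p.1 p.2‖
      ≤ ∑ p : m × k, ‖M p.1 p.2‖ * ‖N p.1 p.2‖ := by
        refine (norm_sum_le _ _).trans_eq (sum_congr rfl fun p _ => ?_)
        rw [norm_mul, norm_star]
    _ ≤ frobNorm M * frobNorm N := by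
        rw [frobNorm, frobNorm, ← hsq, ← hsq]
        exact Real.sum_mul_le_sqrt_mul_sqrt _ _ _

def toeplitzDiag (n : ℕ) (d : ℤ) : Finset (Fin n × Fin n) :=
  {p | (p.2 : ℤ) - p.1 = d}

section Toeplitz

variable {n : ℕ}

lemma toepProj_apply_of_mem_toeplitzDiag (M : Matrix (Fin n) (Fin n) ℂ) {d : ℤ}
    {p : Fin n × Fin n} (hp : p ∈ toeplitzDiag n d) :
    toepProj M p.1 p.2 = (∑ q ∈ toeplitzDiag n d, M q.1 q.2) / #(toeplitzDiag n d) := by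
  obtain rfl := (mem_filter.mp hp).2
  rfl

lemma IsToeplitz.apply_eq_of_mem_toeplitzDiag {N : Matrix (Fin n) (Fin n) ℂ} (hN : IsToeplitz N)
    {d : ℤ} {p q : Fin n × Fin n} (hp : p ∈ toeplitzDiag n d) (hq : q ∈ toeplitzDiag n d) :
    N p.1 p.2 = N q.1 q.2 :=
  hN _ _ _ _ ((mem_filter.mp hp).2.trans (mem_filter.mp hq).2.symm)

lemma IsToeplitz.sum_toeplitzDiag_star_toepProj_mul {N : Matrix (Fin n) (Fin n) ℂ}
    (hN : IsToeplitz N) (M : Matrix (Fin n) (Fin n) ℂ) (d : ℤ) :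
    ∑ p ∈ toeplitzDiag n d, star (toepProj M p.1 p.2) * N p.1 p.2 =
      ∑ p ∈ toeplitzDiag n d, star (M p.1 p.2) * N p.1 p.2 := by
  set D := toeplitzDiag n d
  rcases D.eq_empty_or_nonempty with hD | ⟨p₀, hp₀⟩
  · simp [hD]
  have hcard : (#D : ℂ) ≠ 0 := Nat.cast_ne_zero.mpr (card_pos.mpr ⟨p₀, hp₀⟩).ne'
  calc ∑ p ∈ D, star (toepProj M p.1 p.2) * N p.1 p.2
      = ∑ p ∈ D, star ((∑ q ∈ D, M q.1 q.2) / #D) * N p₀.1 p₀.2 :=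
        sum_congr rfl fun p hp => by
          rw [toepProj_apply_of_mem_toeplitzDiag M hp, hN.apply_eq_of_mem_toeplitzDiag hp hp₀]
    _ = star (∑ q ∈ D, M q.1 q.2) * N p₀.1 p₀.2 := by
        rw [sum_const, nsmul_eq_mul, star_div₀, star_natCast]
        field_simp
    _ = ∑ p ∈ D, star (M p.1 p.2) * N p.1 p.2 := by
        rw [star_sum, sum_mul]
        exact sum_congr rfl fun p hp => by rw [hN.apply_eq_of_mem_toeplitzDiag hp hp₀]

lemma IsToeplitz.sum_star_toepProj_mul {N : Matrix (Fin n) (Fin n) ℂ} (hN : IsToeplitz N)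
    (M : Matrix (Fin n) (Fin n) ℂ) :
    ∑ p : Fin n × Fin n, star (toepProj M p.1 p.2) * N p.1 p.2 =
      ∑ p : Fin n × Fin n, star (M p.1 p.2) * N p.1 p.2 := by
  let offset : Fin n × Fin n → ℤ := fun p => (p.2 : ℤ) - p.1
  have hmaps : ∀ p ∈ (univ : Finset (Fin n × Fin n)), offset p ∈ univ.image offset :=
    fun p hp => mem_image_of_mem offset hp
  rw [← sum_fiberwise_of_maps_to hmaps, ← sum_fiberwise_of_maps_to hmaps]
  exact sum_congr rfl fun d _ => hN.sum_toeplitzDiag_star_toepProj_mul M d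

end Toeplitz

lemma dotProduct_mulVec_eq_sum_star_vecMulVec {m k : Type*} [Fintype m] [Fintype k]
    (E : Matrix m k ℂ) (y : m → ℂ) (x : k → ℂ) :
    star y ⬝ᵥ (E *ᵥ x) = ∑ p : m × k, star (vecMulVec y (star x) p.1 p.2) * E p.1 p.2 := by
  simp only [Fintype.sum_prod_type, dotProduct, mulVec, mul_sum, vecMulVec_apply, star_mul',
    Pi.star_apply, star_star]
  exact sum_congr rfl fun i _ => sum_congr rfl fun j _ => by ring

theorem deriv_mul_dotProduct_eq_dotProduct_mulVec_of_eigen {ι : Type*} [Fintype ι] {A E : Matrix ι ι ℂ}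
    {lam : ℝ → ℂ} {v : ℝ → ι → ℂ} {w : ι → ℂ}
    (hlam : DifferentiableAt ℝ lam 0) (hv : DifferentiableAt ℝ v 0)
    (heig : ∀ᶠ t in nhds (0 : ℝ), (A + t • E) *ᵥ v t = lam t • v t)
    (hw : w ᵥ* A = lam 0 • w) :
    deriv lam 0 * (w ⬝ᵥ v 0) = w ⬝ᵥ (E *ᵥ v 0) := by
  set c : ℝ → ℂ := fun t => w ⬝ᵥ v t
  set h : ℝ → ℂ := fun t => w ⬝ᵥ (E *ᵥ v t)
  have hc : DifferentiableAt ℝ c 0 := by simp only [c, dotProduct]; fun_prop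
  have hh : DifferentiableAt ℝ h 0 := by simp only [h, dotProduct, mulVec]; fun_prop
  have hpair : (fun t : ℝ => lam 0 * c t + t * h t) =ᶠ[nhds 0] fun t => lam t * c t := by
    filter_upwards [heig] with t ht
    have := congrArg (w ⬝ᵥ ·) ht
    simp only [add_mulVec, dotProduct_add, smul_mulVec, dotProduct_smul, smul_eq_mul] at this
    rwa [dotProduct_mulVec w A, hw, smul_dotProduct, smul_eq_mul] at this
  have hofReal : HasDerivAt (fun t : ℝ => (t : ℂ)) 1 0 := by
    simpa using (hasDerivAt_id (0 : ℝ)).ofReal_comp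
  have hL := (hc.hasDerivAt.const_mul (lam 0)).add (hofReal.mul hh.hasDerivAt)
  have hR := hlam.hasDerivAt.mul hc.hasDerivAt
  have := (hL.congr_of_eventuallyEq hpair.symm).unique hR
  simp only [Complex.ofReal_zero, zero_mul, add_zero, one_mul] at this
  linear_combination -this

theorem toeplitz_structured_condition_bound_general (n : ℕ) (A E : Matrix (Fin n) (Fin n) ℂ)
    (hE : IsToeplitz E) (hEn : frobNorm E = 1)
    (lam : ℝ → ℂ) (v : ℝ → Fin n → ℂ)
    (hlam : DifferentiableAt ℝ lam 0) (hv : DifferentiableAt ℝ v 0)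
    (heig : ∀ᶠ t in nhds (0 : ℝ), (A + t • E) *ᵥ v t = lam t • v t)
    (x : Fin n → ℂ) (hx : x = v 0)
    (y : Fin n → ℂ)
    (hy : Aᴴ *ᵥ y = (starRingEnd ℂ) (lam 0) • y)
    (hyx : star y ⬝ᵥ x ≠ 0) :
    ‖deriv lam 0‖ ≤
      frobNorm (toepProj (Matrix.vecMulVec y (star x))) / ‖star y ⬝ᵥ x‖ := by
  have hleft : star y ᵥ* A = lam 0 • star y := by
    simpa [star_mulVec] using congrArg star hy
  have hfirst := deriv_mul_dotProduct_eq_dotProduct_mulVec_of_eigen hlam hv heig hleft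
  rw [← hx] at hfirst
  rw [le_div_iff₀ (norm_pos_iff.mpr hyx), ← norm_mul, hfirst]
  calc ‖star y ⬝ᵥ (E *ᵥ x)‖
      = ‖∑ p : Fin n × Fin n, star (toepProj (vecMulVec y (star x)) p.1 p.2) * E p.1 p.2‖ := by
        rw [hE.sum_star_toepProj_mul, dotProduct_mulVec_eq_sum_star_vecMulVec]
    _ ≤ frobNorm (toepProj (vecMulVec y (star x))) * frobNorm E :=
        norm_sum_star_mul_le_frobNorm _ _
    _ = frobNorm (toepProj (vecMulVec y (star x))) := by rw [hEn, mul_one]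

/-- Structured eigenvalue sensitivity for Toeplitz matrices: under a unit-norm Toeplitz
perturbation, `|λ'(0)| ≤ ‖P(y xᴴ)‖_F / |yᴴ x|` (the Toeplitz structured condition number). -/
theorem toeplitz_structured_condition_bound (n : ℕ) (A E : Matrix (Fin n) (Fin n) ℂ)
    (hA : IsToeplitz A) (hE : IsToeplitz E) (hEn : frobNorm E = 1)
    (lam : ℝ → ℂ) (v : ℝ → Fin n → ℂ)
    (hlam : DifferentiableAt ℝ lam 0) (hv : DifferentiableAt ℝ v 0)
    (heig : ∀ᶠ t in nhds (0 : ℝ), (A + t • E) *ᵥ v t = lam t • v t)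
    (x : Fin n → ℂ) (hx : x = v 0) (hxn : euclNorm x = 1)
    (y : Fin n → ℂ) (hyn : euclNorm y = 1)
    (hy : Aᴴ *ᵥ y = (starRingEnd ℂ) (lam 0) • y)
    (hyx : star y ⬝ᵥ x ≠ 0) :
    ‖deriv lam 0‖ ≤
      frobNorm (toepProj (Matrix.vecMulVec y (star x))) / ‖star y ⬝ᵥ x‖ :=
  toeplitz_structured_condition_bound_general n A E hE hEn lam v hlam hv heig x hx y hy hyx
end
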